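/- arXiv:2104.11656 — 9 statements merged into one kernel-verified Lean document; each statement's English description precedes it below -/
import Mathlib

section
/- Let H be a separable Hilbert space, K a bounded operator on H, and {f_j} a K-frame for H with frame operator S. If K has closed range and S(R(K)) = R(K), then {S^{-1/2} P_{R(K)} f_j} is a Parseval frame for R(K), i.e., for every f in R(K), the sum over j of |⟨f, S^{-1/2} P_{R(K)} f_j⟩|² equals ‖f‖². -/
/-!
Write `R` for the square root `S^{-1/2}` and `P` for the projection onto `R(K)`. For `x ∈ R(K)`,
self-adjointness of `R` and `P`, together with `P (R x) = R x`, give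
`⟪R (P f_j), x⟫ = ⟪f_j, R x⟫`, so the sum in question is `Σ_j |⟪f_j, R x⟫|² = ⟪R x, S (R x)⟫`,
by the definition of the frame operator. Since `R S R = id` on `R(K)`, this is `‖x‖²`.
-/

open scoped ComplexInnerProductSpace InnerProductSpace
open ContinuousLinearMap

theorem hasSum_norm_inner_sq_of_hasSum_smul {𝕜 E J : Type*} [RCLike 𝕜] [NormedAddCommGroup E]
    [InnerProductSpace 𝕜 E] {f : J → E} {S : E → E}
    (hS : ∀ x, HasSum (fun j => ⟪f j, x⟫_𝕜 • f j) (S x)) (y : E) :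
    HasSum (fun j => ‖⟪f j, y⟫_𝕜‖ ^ 2) (RCLike.re ⟪y, S y⟫_𝕜) := by
  have hsum : HasSum (fun j => ⟪y, ⟪f j, y⟫_𝕜 • f j⟫_𝕜) ⟪y, S y⟫_𝕜 :=
    (innerSL 𝕜 y).hasSum (hS y)
  convert RCLike.hasSum_re _ hsum using 2 with j
  rw [inner_smul_right, ← inner_conj_symm y (f j), RCLike.mul_conj]
  norm_cast

theorem apply_apply_apply_eq_self_of_mapsTo {α : Type*} {S R : α → α} {V : Set α}
    (hS : Set.MapsTo S V V) (hR : Set.MapsTo R V V)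
    (hinv : ∀ x ∈ V, S (R (R x)) = x ∧ R (R (S x)) = x) {x : α} (hx : x ∈ V) :
    R (S (R x)) = x := by
  have hRx : R x ∈ V := hR hx
  have hRSRx : R (S (R x)) ∈ V := hR (hS hRx)
  have h : R (R (R (S (R x)))) = R (R x) := congrArg R (hinv (R x) hRx).2
  rw [← (hinv _ hRSRx).1, h, (hinv x hx).1]

theorem stmt_0_general {H : Type*} [NormedAddCommGroup H] [InnerProductSpace ℂ H] [CompleteSpace H]
    {J : Type} (K S Sr P : H →L[ℂ] H) (f : J → H)
    (hS : ∀ x : H, HasSum (fun j => ⟪f j, x⟫ • f j) (S x))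
    (hSrange : S '' Set.range K = Set.range K)
    (hP_idem : P ∘L P = P) (hP_sa : ContinuousLinearMap.adjoint P = P)
    (hP_range : Set.range P = Set.range K)
    (hSr_mem : ∀ x ∈ Set.range K, Sr x ∈ Set.range K)
    (hSr_sa : ContinuousLinearMap.adjoint Sr = Sr)
    (hSr_inv : ∀ x ∈ Set.range K, S (Sr (Sr x)) = x ∧ Sr (Sr (S x)) = x) :
    ∀ x ∈ Set.range K, HasSum (fun j => ‖⟪Sr (P (f j)), x⟫‖ ^ 2) (‖x‖ ^ 2) := by
  intro x hx
  have hSr_symm (u v : H) : ⟪Sr u, v⟫ = ⟪u, Sr v⟫ := by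
    rw [← adjoint_inner_left, hSr_sa]
  have hP_symm (u v : H) : ⟪P u, v⟫ = ⟪u, P v⟫ := by
    rw [← adjoint_inner_left, hP_sa]
  have hPSr : P (Sr x) = Sr x := by
    obtain ⟨w, hw⟩ : Sr x ∈ Set.range P := hP_range ▸ hSr_mem x hx
    rw [← hw, ← comp_apply, hP_idem]
  have hterm : ∀ j, ⟪Sr (P (f j)), x⟫ = ⟪f j, Sr x⟫ := fun j => by
    rw [hSr_symm, hP_symm, hPSr]
  have hSrSSr : Sr (S (Sr x)) = x :=
    apply_apply_apply_eq_self_of_mapsTo (Set.mapsTo_iff_image_subset.2 hSrange.subset) hSr_mem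
      hSr_inv hx
  have hnorm : RCLike.re ⟪Sr x, S (Sr x)⟫ = ‖x‖ ^ 2 := by
    rw [hSr_symm, hSrSSr, inner_self_eq_norm_sq]
  simpa only [hterm, hnorm] using hasSum_norm_inner_sq_of_hasSum_smul hS (Sr x)

/-- If `{f_j}` is a `K`-frame for `H` with frame operator `S`, `K` has closed range and
`S(R(K)) = R(K)`, then `{S^{-1/2} P_{R(K)} f_j}` is a Parseval frame for `R(K)`.
Here `P` is the orthogonal projection onto `R(K)` and `Sr` is the (positive, self-adjoint)
square root of the inverse of `S` restricted to `R(K)`. -/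
theorem stmt_0 {H : Type*} [NormedAddCommGroup H] [InnerProductSpace ℂ H] [CompleteSpace H]
    {J : Type} (K S Sr P : H →L[ℂ] H) (f : J → H)
    (hclosed : IsClosed (Set.range K))
    (hframe : ∃ A B : ℝ, 0 < A ∧ A ≤ B ∧ ∀ x : H,
      Summable (fun j => ‖⟪f j, x⟫‖ ^ 2) ∧
      A * ‖ContinuousLinearMap.adjoint K x‖ ^ 2 ≤ ∑' j, ‖⟪f j, x⟫‖ ^ 2 ∧
      ∑' j, ‖⟪f j, x⟫‖ ^ 2 ≤ B * ‖x‖ ^ 2)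
    (hS : ∀ x : H, HasSum (fun j => ⟪f j, x⟫ • f j) (S x))
    (hSrange : S '' Set.range K = Set.range K)
    (hP_idem : P ∘L P = P) (hP_sa : ContinuousLinearMap.adjoint P = P)
    (hP_range : Set.range P = Set.range K)
    (hSr_mem : ∀ x ∈ Set.range K, Sr x ∈ Set.range K)
    (hSr_sa : ContinuousLinearMap.adjoint Sr = Sr)
    (hSr_pos : ∀ x : H, 0 ≤ (⟪x, Sr x⟫).re)
    (hSr_inv : ∀ x ∈ Set.range K, S (Sr (Sr x)) = x ∧ Sr (Sr (S x)) = x) :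
    ∀ x ∈ Set.range K, HasSum (fun j => ‖⟪Sr (P (f j)), x⟫‖ ^ 2) (‖x‖ ^ 2) :=
  stmt_0_general K S Sr P f hS hSrange hP_idem hP_sa hP_range hSr_mem hSr_sa hSr_inv
end

section
/- Let H be a separable Hilbert space, K a bounded operator on H with closed range, and {f_j} a K-frame for H with frame operator S such that S(R(K)) = R(K). Then {S^{-1/2} P_{R(K)} f_j} is a Parseval P_{R(K)}-frame for H, i.e., for every f in H, Σ_j |⟨f, S^{-1/2} P_{R(K)} f_j⟩|² = ‖P_{R(K)} f‖². -/
/-!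
Write `R = R(K) = R(P)` and `w = S^{-1/2} P f`. Since `S^{-1/2}` is self-adjoint and leaves `R`
invariant, `⟨S^{-1/2} P f_j, f⟩ = ⟨f_j, w⟩`, so the sum is `Σ_j |⟨f_j, w⟩|² = ⟨w, S w⟩`, the
quadratic form of the frame operator. Moving one `S^{-1/2}` across gives
`⟨P f, S^{-1/2} S S^{-1/2} P f⟩`, and `S^{-1/2} S S^{-1/2} = 1` on `R` because `S` maps `R` into itself and is inverted there by
`(S^{-1/2})²`.
-/

open scoped ComplexInnerProductSpace InnerProductSpace
open ContinuousLinearMap Set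

theorem Set.InvOn.leftInvOn_comp_of_comp_self {α : Type*} {S T : α → α} {R : Set α}
    (h : InvOn S (T ∘ T) R R) (hS : MapsTo S R R) (hT : MapsTo T R R) :
    LeftInvOn T (S ∘ T) R := by
  intro z hz
  have hTSTz : T (T (S (T z))) = T z := h.2 (hT hz)
  calc T (S (T z)) = S (T (T (T (S (T z))))) := (h.1 (hT (hS (hT hz)))).symm
    _ = z := by rw [hTSTz]; exact h.1 hz

section InnerProductSpace

variable {𝕜 E : Type*} [RCLike 𝕜] [NormedAddCommGroup E] [InnerProductSpace 𝕜 E]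

theorem hasSum_norm_inner_sq_of_hasSum_inner_smul {ι : Type*} {f : ι → E} {x y : E}
    (h : HasSum (fun j => ⟪f j, x⟫_𝕜 • f j) y) :
    HasSum (fun j => ‖⟪f j, x⟫_𝕜‖ ^ 2) (RCLike.re ⟪x, y⟫_𝕜) := by
  have hterm (j : ι) : ⟪x, ⟪f j, x⟫_𝕜 • f j⟫_𝕜 = ((‖⟪f j, x⟫_𝕜‖ ^ 2 : ℝ) : 𝕜) := by
    rw [inner_smul_right, ← inner_conj_symm x (f j), RCLike.mul_conj, RCLike.ofReal_pow]
  have hinner := (innerSL 𝕜 x).hasSum h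
  simp only [innerSL_apply_apply, hterm] at hinner
  simpa using RCLike.reCLM.hasSum hinner

theorem ContinuousLinearMap.apply_eq_self_of_mem_range {P : E →L[𝕜] E} (hP : IsIdempotentElem P)
    {u : E} (hu : u ∈ range P) : P u = u := by
  obtain ⟨v, rfl⟩ := hu
  exact congr($hP v)

variable [CompleteSpace E] {P T : E →L[𝕜] E}

theorem ContinuousLinearMap.inner_apply_right_of_mem_range (hP : IsStarProjection P) {u : E}
    (hu : u ∈ range P) (x : E) : ⟪u, P x⟫_𝕜 = ⟪u, x⟫_𝕜 := by
  calc ⟪u, P x⟫_𝕜 = ⟪P u, x⟫_𝕜 := (hP.isSelfAdjoint.isSymmetric u x).symm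
    _ = ⟪u, x⟫_𝕜 := by rw [apply_eq_self_of_mem_range hP.isIdempotentElem hu]

theorem ContinuousLinearMap.inner_comp_apply_of_mapsTo_range (hP : IsStarProjection P)
    (hT : IsSelfAdjoint T) (hTP : MapsTo T (range P) (range P)) (a x : E) :
    ⟪T (P a), x⟫_𝕜 = ⟪a, T (P x)⟫_𝕜 := by
  calc ⟪T (P a), x⟫_𝕜 = ⟪T (P a), P x⟫_𝕜 :=
        (inner_apply_right_of_mem_range hP (hTP ⟨a, rfl⟩) x).symm
    _ = ⟪a, P (T (P x))⟫_𝕜 :=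
        (hT.isSymmetric (P a) (P x)).trans (hP.isSelfAdjoint.isSymmetric a (T (P x)))
    _ = ⟪a, T (P x)⟫_𝕜 := by rw [apply_eq_self_of_mem_range hP.isIdempotentElem (hTP ⟨x, rfl⟩)]

end InnerProductSpace

theorem stmt_1_general {H : Type*} [NormedAddCommGroup H] [InnerProductSpace ℂ H] [CompleteSpace H]
    {J : Type} (K S Sr P : H →L[ℂ] H) (f : J → H)
    (hS : ∀ x : H, HasSum (fun j => ⟪f j, x⟫ • f j) (S x))
    (hSrange : S '' Set.range K = Set.range K)
    (hP_idem : P ∘L P = P) (hP_sa : ContinuousLinearMap.adjoint P = P)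
    (hP_range : Set.range P = Set.range K)
    (hSr_mem : ∀ x ∈ Set.range K, Sr x ∈ Set.range K)
    (hSr_sa : ContinuousLinearMap.adjoint Sr = Sr)
    (hSr_inv : ∀ x ∈ Set.range K, S (Sr (Sr x)) = x ∧ Sr (Sr (S x)) = x) :
    ∀ x : H, HasSum (fun j => ‖⟪Sr (P (f j)), x⟫‖ ^ 2) (‖P x‖ ^ 2) := by
  intro x
  rw [← hP_range] at hSrange hSr_mem hSr_inv
  have hP : IsStarProjection P := ⟨hP_idem, hP_sa⟩
  have hSr_maps : MapsTo Sr (range P) (range P) := hSr_mem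
  have hS_maps : MapsTo S (range P) (range P) := mapsTo_iff_image_subset.2 hSrange.subset
  have hinv : InvOn S (Sr ∘ Sr) (range P) (range P) :=
    ⟨fun z hz => (hSr_inv z hz).1, fun z hz => (hSr_inv z hz).2⟩
  have hSrSSr : Sr (S (Sr (P x))) = P x :=
    hinv.leftInvOn_comp_of_comp_self hS_maps hSr_maps ⟨x, rfl⟩
  have hquad : RCLike.re ⟪Sr (P x), S (Sr (P x))⟫ = ‖P x‖ ^ 2 := by
    rw [← hSr_sa, adjoint_inner_left, hSr_sa, hSrSSr, inner_self_eq_norm_sq]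
  have hsum := hasSum_norm_inner_sq_of_hasSum_inner_smul (hS (Sr (P x)))
  rw [hquad] at hsum
  simpa only [inner_comp_apply_of_mapsTo_range hP hSr_sa hSr_maps] using hsum

/-- If `{f_j}` is a `K`-frame for `H` with frame operator `S`, `K` has closed range and
`S(R(K)) = R(K)`, then `{S^{-1/2} P_{R(K)} f_j}` is a Parseval `P_{R(K)}`-frame for `H`:
for every `f ∈ H`, `Σ_j |⟨f, S^{-1/2} P_{R(K)} f_j⟩|² = ‖P_{R(K)} f‖²`. -/
theorem stmt_1 {H : Type*} [NormedAddCommGroup H] [InnerProductSpace ℂ H] [CompleteSpace H]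
    {J : Type} (K S Sr P : H →L[ℂ] H) (f : J → H)
    (hclosed : IsClosed (Set.range K))
    (hframe : ∃ A B : ℝ, 0 < A ∧ A ≤ B ∧ ∀ x : H,
      Summable (fun j => ‖⟪f j, x⟫‖ ^ 2) ∧
      A * ‖ContinuousLinearMap.adjoint K x‖ ^ 2 ≤ ∑' j, ‖⟪f j, x⟫‖ ^ 2 ∧
      ∑' j, ‖⟪f j, x⟫‖ ^ 2 ≤ B * ‖x‖ ^ 2)
    (hS : ∀ x : H, HasSum (fun j => ⟪f j, x⟫ • f j) (S x))
    (hSrange : S '' Set.range K = Set.range K)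
    (hP_idem : P ∘L P = P) (hP_sa : ContinuousLinearMap.adjoint P = P)
    (hP_range : Set.range P = Set.range K)
    (hSr_mem : ∀ x ∈ Set.range K, Sr x ∈ Set.range K)
    (hSr_sa : ContinuousLinearMap.adjoint Sr = Sr)
    (hSr_pos : ∀ x : H, 0 ≤ (⟪x, Sr x⟫).re)
    (hSr_inv : ∀ x ∈ Set.range K, S (Sr (Sr x)) = x ∧ Sr (Sr (S x)) = x) :
    ∀ x : H, HasSum (fun j => ‖⟪Sr (P (f j)), x⟫‖ ^ 2) (‖P x‖ ^ 2) :=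
  stmt_1_general K S Sr P f hS hSrange hP_idem hP_sa hP_range hSr_mem hSr_sa hSr_inv
end

section
/- Let H be a separable Hilbert space, K ∈ B(H), and F = {f_1, …, f_M} a finite set of vectors in H each of norm ‖K‖. Then there exists a K-frame for H consisting entirely of vectors of norm ‖K‖ which contains the set F. Concretely, for each j choose an orthonormal basis {e_{ij}}_{i∈I} of H containing f_j/‖K‖; then {‖K‖ e_{ij}}_{1≤j≤M, i∈I} is a K-frame with bounds M and M‖K‖² containing F. -/
open scoped ComplexInnerProductSpace
open ContinuousLinearMap

/-!
Normalise each `f_j` to a unit vector and extend it to a Hilbert basis `b_j`. By Parseval,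
each scaled basis `‖K‖ • b_j` is a tight frame with bound `‖K‖²`, so their union is a tight frame
with bound `M‖K‖²`; the lower bound follows from `‖K* x‖ ≤ ‖K‖ ‖x‖`. Separability makes each
basis countable, so the frame can be indexed by a type in `Type`.
-/

section

variable {𝕜 E : Type*} [RCLike 𝕜] [NormedAddCommGroup E] [InnerProductSpace 𝕜 E]

theorem HilbertBasis.hasSum_norm_inner_sq {ι : Type*} (b : HilbertBasis ι 𝕜 E) (x : E) :
    HasSum (fun i => ‖inner 𝕜 (b i) x‖ ^ 2) (‖x‖ ^ 2) := by
  have h := lp.hasSum_norm (p := 2) (by norm_num) (b.repr x)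
  simpa [b.repr_apply_apply] using h

theorem HilbertBasis.hasSum_sigma_norm_inner_smul_sq {J : Type*} [Fintype J] {ι : J → Type*}
    (b : ∀ j, HilbertBasis (ι j) 𝕜 E) (c : 𝕜) (x : E) :
    HasSum (fun p : Σ j, ι j => ‖inner 𝕜 (c • b p.1 p.2) x‖ ^ 2)
      (Fintype.card J * (‖c‖ ^ 2 * ‖x‖ ^ 2)) := by
  have h_smul : ∀ v : E, ‖inner 𝕜 (c • v) x‖ ^ 2 = ‖c‖ ^ 2 * ‖inner 𝕜 v x‖ ^ 2 := fun v => by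
    rw [inner_smul_left, norm_mul, RCLike.norm_conj, mul_pow]
  have h_fiber (j : J) :
      HasSum (fun i => ‖inner 𝕜 (c • b j i) x‖ ^ 2) (‖c‖ ^ 2 * ‖x‖ ^ 2) := by
    simpa only [h_smul] using ((b j).hasSum_norm_inner_sq x).mul_left (‖c‖ ^ 2)
  have h_total :
      HasSum (fun _ : J => ‖c‖ ^ 2 * ‖x‖ ^ 2) (Fintype.card J * (‖c‖ ^ 2 * ‖x‖ ^ 2)) := by
    convert hasSum_fintype fun _ : J => ‖c‖ ^ 2 * ‖x‖ ^ 2 using 1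
    simp
  refine h_total.sigma_of_hasSum h_fiber ?_
  exact (summable_sigma_of_nonneg fun _ => by positivity).mpr
    ⟨fun j => (h_fiber j).summable, Summable.of_finite⟩

theorem Orthonormal.countable [TopologicalSpace.SeparableSpace E] {ι : Type*} {v : ι → E}
    (hv : Orthonormal 𝕜 v) : Countable ι := by
  refine Pairwise.countable_of_isOpen_disjoint (s := fun i => Metric.ball (v i) (1 / 2))
    (fun i j hij => Metric.ball_disjoint_ball ?_) (fun _ => Metric.isOpen_ball)
    (fun _ => Metric.nonempty_ball.mpr (by norm_num))
  have h_dist_sq : dist (v i) (v j) ^ 2 = 2 := by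
    rw [dist_eq_norm, @norm_sub_sq 𝕜, hv.inner_eq_zero hij, hv.norm_eq_one, hv.norm_eq_one]
    norm_num
  nlinarith [dist_nonneg (x := v i) (y := v j)]

noncomputable def HilbertBasis.reindex [CompleteSpace E] {ι ι' : Type*}
    (b : HilbertBasis ι 𝕜 E) (e : ι ≃ ι') : HilbertBasis ι' 𝕜 E :=
  HilbertBasis.mk (b.orthonormal.comp e.symm e.symm.injective)
    (by rw [e.symm.surjective.range_comp, b.dense_span])

@[simp]
theorem HilbertBasis.reindex_apply [CompleteSpace E] {ι ι' : Type*}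
    (b : HilbertBasis ι 𝕜 E) (e : ι ≃ ι') (i : ι') : b.reindex e i = b (e.symm i) := by
  simp [HilbertBasis.reindex]

theorem exists_hilbertBasis_mem [CompleteSpace E] [TopologicalSpace.SeparableSpace E] {u : E}
    (hu : ‖u‖ = 1) : ∃ (ι : Type) (b : HilbertBasis ι 𝕜 E), u ∈ Set.range b := by
  have h_orth : Orthonormal 𝕜 ((↑) : ({u} : Set E) → E) := by
    rw [orthonormal_iff_ite]
    rintro ⟨_, rfl⟩ ⟨_, rfl⟩
    simp [inner_self_eq_norm_sq_to_K, hu]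
  obtain ⟨w, b, huw, hb⟩ := h_orth.exists_hilbertBasis_extension
  have : Countable w := b.orthonormal.countable
  let e : w ≃ Shrink.{0} w := equivShrink.{0} w
  exact ⟨Shrink w, b.reindex e, e ⟨u, huw rfl⟩, by simp [hb]⟩

end

theorem stmt_4_general {H : Type*} [NormedAddCommGroup H] [InnerProductSpace ℂ H] [CompleteSpace H]
    [TopologicalSpace.SeparableSpace H]
    (K : H →L[ℂ] H) (hK : K ≠ 0) {M : ℕ} (F : Fin M → H)
    (hF : ∀ i, ‖F i‖ = ‖K‖) :
    ∃ (J : Type) (g : J → H),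
      (∀ j, ‖g j‖ = ‖K‖) ∧
      (∀ x : H, Summable (fun j => ‖⟪g j, x⟫‖ ^ 2)) ∧
      (∀ x : H,
        (M : ℝ) * ‖ContinuousLinearMap.adjoint K x‖ ^ 2 ≤ ∑' j, ‖⟪g j, x⟫‖ ^ 2 ∧
        ∑' j, ‖⟪g j, x⟫‖ ^ 2 ≤ ((M : ℝ) * ‖K‖ ^ 2) * ‖x‖ ^ 2) ∧
      (∀ i, ∃ j, g j = F i) := by
  have hK_pos : 0 < ‖K‖ := norm_pos_iff.mpr hK
  have h_unit (i : Fin M) : ‖(‖K‖⁻¹ : ℂ) • F i‖ = 1 := by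
    simp [norm_smul, hF i, hK_pos.ne']
  choose ι b hb using fun i => exists_hilbertBasis_mem (𝕜 := ℂ) (h_unit i)
  let g : (Σ i, ι i) → H := fun p => (‖K‖ : ℂ) • b p.1 p.2
  have h_frame (x : H) : HasSum (fun p => ‖⟪g p, x⟫‖ ^ 2) (M * (‖K‖ ^ 2 * ‖x‖ ^ 2)) := by
    simpa only [Complex.norm_real, norm_norm, Fintype.card_fin] using
      HilbertBasis.hasSum_sigma_norm_inner_smul_sq b (‖K‖ : ℂ) x
  refine ⟨_, g, fun p => by simp [g, norm_smul, (b p.1).orthonormal.norm_eq_one],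
    fun x => (h_frame x).summable,
    fun x => ⟨?_, by rw [(h_frame x).tsum_eq, mul_assoc]⟩, fun i => ?_⟩
  · have h_adj : ‖adjoint K x‖ ≤ ‖K‖ * ‖x‖ := by
      simpa only [adjoint.norm_map] using (adjoint K).le_opNorm x
    rw [(h_frame x).tsum_eq, ← mul_pow]
    gcongr
  · obtain ⟨n, hn⟩ := hb i
    refine ⟨⟨i, n⟩, ?_⟩
    rw [show g ⟨i, n⟩ = (‖K‖ : ℂ) • b i n from rfl, hn, smul_smul,
      mul_inv_cancel₀ (by exact_mod_cast hK_pos.ne'), one_smul]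

/-- Every finite set `F = {f_1, …, f_M}` of vectors of norm `‖K‖` in a separable Hilbert
space `H` can be extended to a `K`-frame for `H` consisting entirely of vectors of norm
`‖K‖`, with frame bounds `M` and `M‖K‖²`. -/
theorem stmt_4 {H : Type*} [NormedAddCommGroup H] [InnerProductSpace ℂ H] [CompleteSpace H]
    [TopologicalSpace.SeparableSpace H]
    (K : H →L[ℂ] H) (hK : K ≠ 0) {M : ℕ} (hM : 0 < M) (F : Fin M → H)
    (hF : ∀ i, ‖F i‖ = ‖K‖) :
    ∃ (J : Type) (g : J → H),
      (∀ j, ‖g j‖ = ‖K‖) ∧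
      (∀ x : H, Summable (fun j => ‖⟪g j, x⟫‖ ^ 2)) ∧
      (∀ x : H,
        (M : ℝ) * ‖ContinuousLinearMap.adjoint K x‖ ^ 2 ≤ ∑' j, ‖⟪g j, x⟫‖ ^ 2 ∧
        ∑' j, ‖⟪g j, x⟫‖ ^ 2 ≤ ((M : ℝ) * ‖K‖ ^ 2) * ‖x‖ ^ 2) ∧
      (∀ i, ∃ j, g j = F i) :=
  stmt_4_general K hK F hF
end

section
/- Let {f_j}_{j∈J} be a Parseval K-frame for a Hilbert space H where K has closed range. Then there exists a Hilbert space M containing R(K†) (the range of the pseudo-inverse of K) and an orthonormal basis {e_j}_{j∈J} of M such that, with P the orthogonal projection of M onto R(K†), one has f_j = K P e_j for every j ∈ J. -/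
/-
Because `K` has closed range and `Σ |⟨f_j, y⟩|² = ‖K* y‖²`, every `f_j` lies in `R(K)`, so
`g_j := K† f_j` satisfies `K g_j = f_j`. Since `K† K x - x ∈ ker K`, the operator `K* (K†)*` fixes
`R(K†) = (ker K)ᗮ`, whence `⟨g_j, v⟩ = ⟨f_j, (K†)* v⟩` makes `{g_j}` a Parseval frame for `R(K†)`.
Its analysis operator `v ↦ (⟨g_j, v⟩)_j` embeds `R(K†)` isometrically into `ℓ²(J)`, and the
projection of the standard basis vector `e_j` onto the image is the image of `g_j`
(Naimark); applying `K` gives `f_j = K P e_j`.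
-/

open scoped ComplexInnerProductSpace
open ContinuousLinearMap

/-- A Naimark-type dilation for a Parseval `K`-frame: a Hilbert space `M` containing
(an isometric copy of) `R(K†)`, an orthonormal basis `{e_j}` of `M` and the orthogonal
projection `P` of `M` onto `R(K†)` such that `f_j = K P e_j` for all `j`. -/
structure NaimarkKDilation {H : Type*} [NormedAddCommGroup H] [InnerProductSpace ℂ H]
    [CompleteSpace H] {J : Type} (K Kd : H →L[ℂ] H) (f : J → H) where
  M : Type
  [instN : NormedAddCommGroup M]
  [instI : InnerProductSpace ℂ M]
  [instC : CompleteSpace M]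
  emb : (LinearMap.range (Kd : H →ₗ[ℂ] H) : Submodule ℂ H) →ₗᵢ[ℂ] M
  basis : HilbertBasis J ℂ M
  proj : M →L[ℂ] M
  proj_idem : proj ∘L proj = proj
  proj_sa : ContinuousLinearMap.adjoint proj = proj
  proj_range : Set.range proj = Set.range emb
  frame_eq : ∀ j, ∃ w : (LinearMap.range (Kd : H →ₗ[ℂ] H) : Submodule ℂ H),
    emb w = proj (basis j) ∧ f j = K w

open scoped InnerProductSpace lp

section

variable {𝕜 E : Type*} [RCLike 𝕜] [NormedAddCommGroup E] [InnerProductSpace 𝕜 E] {J : Type*}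

variable (𝕜) in
def IsParsevalFrame (g : J → E) : Prop :=
  ∀ v : E, HasSum (fun j => ‖⟪g j, v⟫_𝕜‖ ^ 2) (‖v‖ ^ 2)

namespace IsParsevalFrame

variable {g : J → E} (hg : IsParsevalFrame 𝕜 g)
include hg

theorem memℓp_inner (v : E) : Memℓp (fun j => ⟪g j, v⟫_𝕜) 2 :=
  memℓp_gen <| by simpa [Real.rpow_natCast] using (hg v).summable

noncomputable def analysis : E →ₗᵢ[𝕜] ℓ²(J, 𝕜) where
  toFun v := ⟨fun j => ⟪g j, v⟫_𝕜, hg.memℓp_inner v⟩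
  map_add' v w := lp.ext <| funext fun j => inner_add_right _ _ _
  map_smul' c v := lp.ext <| funext fun j => inner_smul_right _ _ _
  norm_map' v := by
    refine (pow_left_inj₀ (norm_nonneg _) (norm_nonneg _) two_ne_zero).mp ?_
    refine HasSum.unique ?_ (hg v)
    simpa [Real.rpow_natCast] using
      lp.hasSum_norm (p := 2) (by norm_num) ⟨fun j => ⟪g j, v⟫_𝕜, hg.memℓp_inner v⟩

theorem analysis_apply (v : E) (j : J) : hg.analysis v j = ⟪g j, v⟫_𝕜 := rfl

theorem inner_single_analysis [DecidableEq J] (v : E) (j : J) :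
    ⟪lp.single 2 j (1 : 𝕜), hg.analysis v⟫_𝕜 = ⟪g j, v⟫_𝕜 := by
  simp [lp.inner_single_left, hg.analysis_apply]

instance [CompleteSpace E] : CompleteSpace (LinearMap.range hg.analysis.toLinearMap) :=
  (hg.analysis.isometry.isClosedEmbedding.isClosed_range).completeSpace_coe

theorem starProjection_single [CompleteSpace E] [DecidableEq J] (j : J) :
    (LinearMap.range hg.analysis.toLinearMap).starProjection (lp.single 2 j 1) =
      hg.analysis (g j) := by
  refine Submodule.eq_starProjection_of_mem_of_inner_eq_zero ⟨g j, rfl⟩ ?_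
  rintro _ ⟨v, rfl⟩
  simp [inner_sub_left, hg.inner_single_analysis]

end IsParsevalFrame

variable [CompleteSpace E]

variable (𝕜) in
def IsParsevalKFrame (K : E →L[𝕜] E) (f : J → E) : Prop :=
  ∀ x : E, HasSum (fun j => ‖⟪f j, x⟫_𝕜‖ ^ 2) (‖adjoint K x‖ ^ 2)

theorem ContinuousLinearMap.adjoint_apply_adjoint_apply_of_mem_orthogonal_ker
    {K Kd : E →L[𝕜] E} (hKd : ∀ x, K (Kd (K x)) = K x) {v : E}
    (hv : v ∈ (LinearMap.ker (K : E →ₗ[𝕜] E))ᗮ) : adjoint K (adjoint Kd v) = v := by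
  refine ext_inner_left 𝕜 fun x => ?_
  rw [adjoint_inner_right, adjoint_inner_right, ← sub_eq_zero, ← inner_sub_left]
  refine Submodule.inner_right_of_mem_orthogonal ?_ hv
  change K (Kd (K x) - x) = 0
  rw [map_sub, hKd, sub_self]

namespace IsParsevalKFrame

variable {K : E →L[𝕜] E} {f : J → E} (hf : IsParsevalKFrame 𝕜 K f)
include hf

theorem mem_range (hK : IsClosed (Set.range K)) (j : J) : f j ∈ Set.range K := by
  have hfj : f j ∈ (LinearMap.range (K : E →ₗ[𝕜] E))ᗮᗮ := by
    refine Submodule.mem_orthogonal' _ _ |>.mpr fun y hy => ?_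
    have hKy : adjoint K y = 0 := by
      simpa [ContinuousLinearMap.orthogonal_range] using hy
    have h0 := hf y
    rw [hKy, norm_zero, zero_pow two_ne_zero,
      hasSum_zero_iff_of_nonneg fun _ => by positivity] at h0
    simpa using congrFun h0 j
  have hK' : IsClosed (LinearMap.range (K : E →ₗ[𝕜] E) : Set E) := by
    rwa [LinearMap.coe_range, coe_coe]
  rwa [Submodule.orthogonal_orthogonal_eq_closure, hK'.submodule_topologicalClosure_eq] at hfj

theorem isParsevalFrame_rangeRestrict {Kd : E →L[𝕜] E} (hKd : ∀ x, K (Kd (K x)) = K x)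
    (hKdrange : LinearMap.range (Kd : E →ₗ[𝕜] E) ≤ (LinearMap.ker (K : E →ₗ[𝕜] E))ᗮ) :
    IsParsevalFrame 𝕜 fun j => (Kd : E →ₗ[𝕜] E).rangeRestrict (f j) := by
  rintro ⟨v, hv⟩
  have := hf (adjoint Kd v)
  rw [adjoint_apply_adjoint_apply_of_mem_orthogonal_ker hKd (hKdrange hv)] at this
  simp only [adjoint_inner_right] at this
  exact this

end IsParsevalKFrame

end

noncomputable def NaimarkKDilation.ofParsevalFrame {H : Type*} [NormedAddCommGroup H]
    [InnerProductSpace ℂ H] [CompleteSpace H] {J : Type} {K Kd : H →L[ℂ] H} {f : J → H}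
    [CompleteSpace (LinearMap.range (Kd : H →ₗ[ℂ] H))]
    {g : J → LinearMap.range (Kd : H →ₗ[ℂ] H)} (hg : IsParsevalFrame ℂ g)
    (hKg : ∀ j, K (g j) = f j) : NaimarkKDilation K Kd f := by
  classical
  exact
  { M := ℓ²(J, ℂ)
    emb := hg.analysis
    basis := HilbertBasis.ofRepr (LinearIsometryEquiv.refl ℂ _)
    proj := (LinearMap.range hg.analysis.toLinearMap).starProjection
    proj_idem := Submodule.isIdempotentElem_starProjection _
    proj_sa := (isSelfAdjoint_starProjection _).adjoint_eq
    proj_range := by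
      rw [← coe_coe, ← LinearMap.coe_range, Submodule.range_starProjection]
      rfl
    frame_eq j := ⟨g j, by
      rw [← HilbertBasis.repr_symm_single]
      exact (hg.starProjection_single j).symm, (hKg j).symm⟩ }

theorem stmt_6_general {H : Type*} [NormedAddCommGroup H] [InnerProductSpace ℂ H] [CompleteSpace H]
    {J : Type}
    (K Kd : H →L[ℂ] H) (f : J → H)
    (hclosed : IsClosed (Set.range K))
    (hKd : ∀ x ∈ Set.range K, K (Kd x) = x)
    (hKdrange : LinearMap.range (Kd : H →ₗ[ℂ] H) = (LinearMap.ker (K : H →ₗ[ℂ] H))ᗮ)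
    (hParseval : ∀ x : H,
      HasSum (fun j => ‖⟪f j, x⟫‖ ^ 2) (‖ContinuousLinearMap.adjoint K x‖ ^ 2)) :
    Nonempty (NaimarkKDilation K Kd f) := by
  have hf : IsParsevalKFrame ℂ K f := hParseval
  have : CompleteSpace (LinearMap.range (Kd : H →ₗ[ℂ] H)) := hKdrange ▸ inferInstance
  have hKKdK : ∀ x, K (Kd (K x)) = K x := fun x => hKd _ ⟨x, rfl⟩
  exact ⟨.ofParsevalFrame (hf.isParsevalFrame_rangeRestrict hKKdK hKdrange.le)
    fun j => hKd _ (hf.mem_range hclosed j)⟩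

/-- If `{f_j}` is a Parseval `K`-frame for `H` and `K` has closed range, then there exist a
Hilbert space `M ⊇ R(K†)` and an orthonormal basis `{e_j}` of `M` such that `f_j = K P e_j`
where `P` is the orthogonal projection of `M` onto `R(K†)`. -/
theorem stmt_6 {H : Type*} [NormedAddCommGroup H] [InnerProductSpace ℂ H] [CompleteSpace H]
    [TopologicalSpace.SeparableSpace H] {J : Type} [Countable J]
    (K Kd : H →L[ℂ] H) (f : J → H)
    (hclosed : IsClosed (Set.range K))
    (hKd : ∀ x ∈ Set.range K, K (Kd x) = x)
    (hKdrange : LinearMap.range (Kd : H →ₗ[ℂ] H) = (LinearMap.ker (K : H →ₗ[ℂ] H))ᗮ)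
    (hParseval : ∀ x : H,
      HasSum (fun j => ‖⟪f j, x⟫‖ ^ 2) (‖ContinuousLinearMap.adjoint K x‖ ^ 2)) :
    Nonempty (NaimarkKDilation K Kd f) :=
  stmt_6_general K Kd f hclosed hKd hKdrange hParseval
end

section
/- Let {f_j}_{j∈J} be a Parseval K-frame for a Hilbert space H where K has closed range, and let K† be the pseudo-inverse of K. Then {K† f_j}_{j∈J} is a Parseval frame for R(K†): for all f ∈ R(K†), Σ_j |⟨f, K† f_j⟩|² = ‖f‖². -/
open scoped ComplexInnerProductSpace
open ContinuousLinearMap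

/-! Since `K K† K = K`, the operator `K* (K†)*` is the identity on `(ker K)ᗮ = R(K†)`. Applying the
Parseval identity of `{f_j}` to `(K†)* x` therefore gives `∑ |⟨f_j, (K†)* x⟩|² = ‖x‖²`, and
`⟨f_j, (K†)* x⟩ = ⟨K† f_j, x⟩`. -/

theorem adjoint_adjoint_apply_eq_self_of_mem_orthogonal_ker {𝕜 E F : Type*} [RCLike 𝕜]
    [NormedAddCommGroup E] [InnerProductSpace 𝕜 E] [CompleteSpace E]
    [NormedAddCommGroup F] [InnerProductSpace 𝕜 F] [CompleteSpace F]
    (K : E →L[𝕜] F) (Kd : F →L[𝕜] E) (hK : ∀ v, K (Kd (K v)) = K v)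
    {x : E} (hx : x ∈ (LinearMap.ker (K : E →ₗ[𝕜] F))ᗮ) :
    adjoint K (adjoint Kd x) = x := by
  refine ext_inner_right 𝕜 fun v => ?_
  have hker : Kd (K v) - v ∈ LinearMap.ker (K : E →ₗ[𝕜] F) := by
    simp [hK]
  have horth : inner 𝕜 x (Kd (K v) - v) = 0 := Submodule.inner_left_of_mem_orthogonal hker hx
  rw [adjoint_inner_left, adjoint_inner_left]
  rwa [inner_sub_right, sub_eq_zero] at horth

theorem stmt_7_general {H : Type*} [NormedAddCommGroup H] [InnerProductSpace ℂ H] [CompleteSpace H]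
    {J : Type} (K Kd : H →L[ℂ] H) (f : J → H)
    (hKd : ∀ x ∈ Set.range K, K (Kd x) = x)
    (hKdrange : LinearMap.range (Kd : H →ₗ[ℂ] H) = (LinearMap.ker (K : H →ₗ[ℂ] H))ᗮ)
    (hParseval : ∀ x : H,
      HasSum (fun j => ‖⟪f j, x⟫‖ ^ 2) (‖ContinuousLinearMap.adjoint K x‖ ^ 2)) :
    ∀ x : H, x ∈ LinearMap.range (Kd : H →ₗ[ℂ] H) →
      HasSum (fun j => ‖⟪Kd (f j), x⟫‖ ^ 2) (‖x‖ ^ 2) := by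
  intro x hx
  rw [hKdrange] at hx
  have hKKdK : ∀ v, K (Kd (K v)) = K v := fun v => hKd (K v) ⟨v, rfl⟩
  have h := hParseval (adjoint Kd x)
  rw [adjoint_adjoint_apply_eq_self_of_mem_orthogonal_ker K Kd hKKdK hx] at h
  simpa only [adjoint_inner_right] using h

/-- If `{f_j}` is a Parseval `K`-frame for `H`, `K` has closed range and `K†` is its
pseudo-inverse, then `{K† f_j}` is a Parseval frame for `R(K†)`. -/
theorem stmt_7 {H : Type*} [NormedAddCommGroup H] [InnerProductSpace ℂ H] [CompleteSpace H]
    {J : Type} (K Kd : H →L[ℂ] H) (f : J → H)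
    (hclosed : IsClosed (Set.range K))
    (hKd : ∀ x ∈ Set.range K, K (Kd x) = x)
    (hKdrange : LinearMap.range (Kd : H →ₗ[ℂ] H) = (LinearMap.ker (K : H →ₗ[ℂ] H))ᗮ)
    (hParseval : ∀ x : H,
      HasSum (fun j => ‖⟪f j, x⟫‖ ^ 2) (‖ContinuousLinearMap.adjoint K x‖ ^ 2)) :
    ∀ x : H, x ∈ LinearMap.range (Kd : H →ₗ[ℂ] H) →
      HasSum (fun j => ‖⟪Kd (f j), x⟫‖ ^ 2) (‖x‖ ^ 2) :=
  stmt_7_general K Kd f hKd hKdrange hParseval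
end

section
/- Let {f_j}_{j∈J} be a Parseval K-frame for H with synthesis operator T, and let {g_j}_{j∈J} be a K-dual of {f_j} with synthesis operator Θ such that {g_j} is a Parseval K*-frame for H. Then for every f ∈ H: ‖(T* − Θ*K*)f‖² = ‖KK*f‖² − ‖K*f‖². -/
open scoped ComplexInnerProductSpace
open ContinuousLinearMap

theorem ContinuousLinearMap.norm_adjoint_apply_eq_of_comp_adjoint_eq {𝕜 E F G : Type*} [RCLike 𝕜]
    [NormedAddCommGroup E] [InnerProductSpace 𝕜 E] [CompleteSpace E]
    [NormedAddCommGroup F] [InnerProductSpace 𝕜 F] [CompleteSpace F]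
    [NormedAddCommGroup G] [InnerProductSpace 𝕜 G] [CompleteSpace G]
    {A : E →L[𝕜] F} {B : G →L[𝕜] F} (h : A ∘L adjoint A = B ∘L adjoint B) (x : F) :
    ‖adjoint A x‖ = ‖adjoint B x‖ := by
  refine (sq_eq_sq₀ (norm_nonneg _) (norm_nonneg _)).mp ?_
  rw [apply_norm_sq_eq_inner_adjoint_left, apply_norm_sq_eq_inner_adjoint_left, adjoint_adjoint,
    adjoint_adjoint, h]

theorem stmt_8_general {H : Type*} [NormedAddCommGroup H] [InnerProductSpace ℂ H] [CompleteSpace H]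
    {J : Type} (K : H →L[ℂ] H)
    (T Θ : lp (fun _ : J => ℂ) 2 →L[ℂ] H)
    (hParseval : T ∘L ContinuousLinearMap.adjoint T = K ∘L ContinuousLinearMap.adjoint K)
    (hdual : T ∘L ContinuousLinearMap.adjoint Θ = K)
    (hParseval' : Θ ∘L ContinuousLinearMap.adjoint Θ = ContinuousLinearMap.adjoint K ∘L K) :
    ∀ x : H,
      ‖(ContinuousLinearMap.adjoint T
          - ContinuousLinearMap.adjoint Θ ∘L ContinuousLinearMap.adjoint K) x‖ ^ 2
        = ‖K (ContinuousLinearMap.adjoint K x)‖ ^ 2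
          - ‖ContinuousLinearMap.adjoint K x‖ ^ 2 := by
  intro x
  have hT : ‖adjoint T x‖ = ‖adjoint K x‖ := norm_adjoint_apply_eq_of_comp_adjoint_eq hParseval x
  have hΘ : ‖adjoint Θ (adjoint K x)‖ = ‖K (adjoint K x)‖ := by
    simpa only [adjoint_adjoint] using
      norm_adjoint_apply_eq_of_comp_adjoint_eq (B := adjoint K) (by rwa [adjoint_adjoint]) _
  have hcross : ⟪adjoint T x, adjoint Θ (adjoint K x)⟫ = ⟪adjoint K x, adjoint K x⟫ := by
    rw [adjoint_inner_left, ← comp_apply, hdual, adjoint_inner_left]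
  rw [sub_apply, comp_apply, norm_sub_sq (𝕜 := ℂ), hT, hΘ, hcross, inner_self_eq_norm_sq]
  ring

/-- If `{f_j}` is a Parseval `K`-frame with synthesis operator `T` and `{g_j}` is a `K`-dual
with synthesis operator `Θ` which is a Parseval `K*`-frame, then for all `f ∈ H`:
`‖(T* − Θ*K*) f‖² = ‖KK* f‖² − ‖K* f‖²`. -/
theorem stmt_8 {H : Type*} [NormedAddCommGroup H] [InnerProductSpace ℂ H] [CompleteSpace H]
    {J : Type} [DecidableEq J] (K : H →L[ℂ] H)
    (T Θ : lp (fun _ : J => ℂ) 2 →L[ℂ] H) (f g : J → H)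
    (hT : ∀ j, T (lp.single 2 j 1) = f j)
    (hΘ : ∀ j, Θ (lp.single 2 j 1) = g j)
    (hParseval : T ∘L ContinuousLinearMap.adjoint T = K ∘L ContinuousLinearMap.adjoint K)
    (hdual : T ∘L ContinuousLinearMap.adjoint Θ = K)
    (hParseval' : Θ ∘L ContinuousLinearMap.adjoint Θ = ContinuousLinearMap.adjoint K ∘L K) :
    ∀ x : H,
      ‖(ContinuousLinearMap.adjoint T
          - ContinuousLinearMap.adjoint Θ ∘L ContinuousLinearMap.adjoint K) x‖ ^ 2
        = ‖K (ContinuousLinearMap.adjoint K x)‖ ^ 2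
          - ‖ContinuousLinearMap.adjoint K x‖ ^ 2 :=
  stmt_8_general K T Θ hParseval hdual hParseval'
end

section
/- Let {f_j}_{j∈J} be a Parseval K-frame for H with synthesis operator T, and {g_j}_{j∈J} a K-dual with synthesis operator Θ such that {g_j} is a Parseval K*-frame, and suppose K has closed range. Then ‖(KK*)^{-1}‖^{-2}(1 − ‖K‖²) ≤ ‖T − KΘ‖² ≤ ‖K‖⁴, where (KK*)^{-1} denotes the inverse of KK* restricted to R(K). -/
open scoped ComplexInnerProductSpace
open ContinuousLinearMap

/-!
Put `D = T - KΘ`. The three frame identities give `‖T* y‖ = ‖K* y‖`, `‖Θ* z‖ = ‖K z‖` and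
`⟪T* y, Θ* K* y⟫ = ‖K* y‖²`, so expanding `D* y = T* y - Θ* K* y` yields
`‖D* y‖² = ‖KK* y‖² - ‖K* y‖²`. This bounds `‖D‖ = ‖D*‖` by `‖K‖²`. It also forces
`‖K* y‖ ≤ ‖KK* y‖ ≤ ‖K‖ ‖K* y‖`, so either `‖K‖ ≥ 1`, and the lower bound is nonpositive, or
`K = 0`, and then `Sd = 0` and the lower bound is `0⁻¹ * 1 = 0`.
-/

open scoped InnerProductSpace InnerProduct

section

variable {𝕜 E F L : Type*} [RCLike 𝕜]
  [NormedAddCommGroup E] [InnerProductSpace 𝕜 E] [CompleteSpace E]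
  [NormedAddCommGroup F] [InnerProductSpace 𝕜 F] [CompleteSpace F]
  [NormedAddCommGroup L] [InnerProductSpace 𝕜 L] [CompleteSpace L]

namespace ContinuousLinearMap

theorem norm_adjoint_apply_eq_of_comp_adjoint_eq_s9 {A : L →L[𝕜] F} {B : E →L[𝕜] F}
    (h : A ∘L A† = B ∘L B†) (y : F) : ‖(A†) y‖ = ‖(B†) y‖ := by
  have hsq : ‖(A†) y‖ ^ 2 = ‖(B†) y‖ ^ 2 := by
    rw [apply_norm_sq_eq_inner_adjoint_right, apply_norm_sq_eq_inner_adjoint_right,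
      adjoint_adjoint, adjoint_adjoint, h]
  exact (pow_left_inj₀ (norm_nonneg _) (norm_nonneg _) two_ne_zero).mp hsq

theorem eq_zero_or_one_le_norm_of_norm_adjoint_apply_le {K : E →L[𝕜] F}
    (h : ∀ y, ‖(K†) y‖ ≤ ‖K ((K†) y)‖) : K = 0 ∨ 1 ≤ ‖K‖ := by
  refine or_iff_not_imp_right.mpr fun hK => ?_
  push Not at hK
  have hKadj : K† = 0 := ext fun y => by
    have hle : ‖(K†) y‖ ≤ ‖K‖ * ‖(K†) y‖ := (h y).trans (K.le_opNorm _)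
    exact norm_le_zero_iff.mp (by nlinarith [norm_nonneg ((K†) y)])
  simpa using congrArg adjoint hKadj

end ContinuousLinearMap

/-- `T` and `Θ` are the synthesis operators of a Parseval `K`-frame and of a `K`-dual of it that
is a Parseval `K*`-frame. -/
structure IsParsevalKDual (K : E →L[𝕜] F) (T : L →L[𝕜] F) (Θ : L →L[𝕜] E) : Prop where
  parseval : T ∘L T† = K ∘L K†
  dual : T ∘L Θ† = K
  parseval_adjoint : Θ ∘L Θ† = K† ∘L K

namespace IsParsevalKDual

variable {K : E →L[𝕜] F} {T : L →L[𝕜] F} {Θ : L →L[𝕜] E}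

theorem norm_adjoint_sub_comp_apply_sq (h : IsParsevalKDual K T Θ) (y : F) :
    ‖((T - K ∘L Θ)†) y‖ ^ 2 = ‖K ((K†) y)‖ ^ 2 - ‖(K†) y‖ ^ 2 := by
  have hTy : ‖(T†) y‖ = ‖(K†) y‖ := norm_adjoint_apply_eq_of_comp_adjoint_eq_s9 h.parseval y
  have hΘK : ‖(Θ†) ((K†) y)‖ = ‖K ((K†) y)‖ := by
    rw [norm_adjoint_apply_eq_of_comp_adjoint_eq_s9 (B := K†)
      (by rw [adjoint_adjoint, h.parseval_adjoint]), adjoint_adjoint]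
  have hcross : RCLike.re ⟪(T†) y, (Θ†) ((K†) y)⟫_𝕜 = ‖(K†) y‖ ^ 2 := by
    rw [adjoint_inner_left, ← comp_apply T, h.dual, ← adjoint_inner_left,
      inner_self_eq_norm_sq]
  have hDy : ((T - K ∘L Θ)†) y = (T†) y - (Θ†) ((K†) y) := by
    rw [map_sub, adjoint_comp]
    rfl
  rw [hDy, norm_sub_sq (𝕜 := 𝕜), hTy, hΘK, hcross]
  ring

theorem norm_sub_comp_le_norm_sq (h : IsParsevalKDual K T Θ) : ‖T - K ∘L Θ‖ ≤ ‖K‖ ^ 2 := by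
  rw [← adjoint.norm_map]
  refine opNorm_le_bound _ (by positivity) fun y => ?_
  have hKK : ‖K ((K†) y)‖ ≤ ‖K‖ ^ 2 * ‖y‖ := by
    calc ‖K ((K†) y)‖ ≤ ‖K‖ * ‖(K†) y‖ := K.le_opNorm _
      _ ≤ ‖K‖ * (‖K‖ * ‖y‖) := by
          gcongr
          simpa only [adjoint.norm_map] using (K†).le_opNorm y
      _ = ‖K‖ ^ 2 * ‖y‖ := by ring
  refine le_of_sq_le_sq ?_ (by positivity)
  nlinarith [h.norm_adjoint_sub_comp_apply_sq y, norm_nonneg (K ((K†) y))]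

theorem eq_zero_or_one_le_norm (h : IsParsevalKDual K T Θ) : K = 0 ∨ 1 ≤ ‖K‖ :=
  eq_zero_or_one_le_norm_of_norm_adjoint_apply_le fun y => by
    have hkey := h.norm_adjoint_sub_comp_apply_sq y
    exact le_of_sq_le_sq (by nlinarith [sq_nonneg ‖((T - K ∘L Θ)†) y‖]) (norm_nonneg _)

end IsParsevalKDual

end

theorem stmt_9_general {H : Type*} [NormedAddCommGroup H] [InnerProductSpace ℂ H] [CompleteSpace H]
    {J : Type} (K : H →L[ℂ] H)
    (T Θ : lp (fun _ : J => ℂ) 2 →L[ℂ] H)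
    (hParseval : T ∘L ContinuousLinearMap.adjoint T = K ∘L ContinuousLinearMap.adjoint K)
    (hdual : T ∘L ContinuousLinearMap.adjoint Θ = K)
    (hParseval' : Θ ∘L ContinuousLinearMap.adjoint Θ = ContinuousLinearMap.adjoint K ∘L K)
    (Sd : H →L[ℂ] H)
    (hSd_range : ∀ x : H, Sd x ∈ Set.range K) :
    (‖Sd‖ ^ 2)⁻¹ * (1 - ‖K‖ ^ 2) ≤ ‖T - K ∘L Θ‖ ^ 2 ∧
      ‖T - K ∘L Θ‖ ^ 2 ≤ ‖K‖ ^ 4 := by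
  have h : IsParsevalKDual K T Θ := ⟨hParseval, hdual, hParseval'⟩
  refine ⟨?_, by simpa only [← pow_mul] using
    pow_le_pow_left₀ (norm_nonneg _) h.norm_sub_comp_le_norm_sq 2⟩
  rcases h.eq_zero_or_one_le_norm with rfl | hK
  · have hSd : Sd = 0 := ext fun x => by
      obtain ⟨z, hz⟩ := hSd_range x
      simpa using hz.symm
    simp [hSd]
  · have hlhs : (‖Sd‖ ^ 2)⁻¹ * (1 - ‖K‖ ^ 2) ≤ 0 :=
      mul_nonpos_of_nonneg_of_nonpos (by positivity) (by nlinarith)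
    exact hlhs.trans (by positivity)

/-- If `{f_j}` is a Parseval `K`-frame with synthesis operator `T`, `{g_j}` a `K`-dual with
synthesis operator `Θ` which is a Parseval `K*`-frame, and `K` has closed range, then
`‖(KK*)⁻¹‖⁻² (1 − ‖K‖²) ≤ ‖T − KΘ‖² ≤ ‖K‖⁴`, where `Sd` realizes the inverse of `KK*`
restricted to `R(K)` (extended by `0` on `R(K)ᗮ`). -/
theorem stmt_9 {H : Type*} [NormedAddCommGroup H] [InnerProductSpace ℂ H] [CompleteSpace H]
    {J : Type} [DecidableEq J] (K : H →L[ℂ] H)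
    (T Θ : lp (fun _ : J => ℂ) 2 →L[ℂ] H) (f g : J → H)
    (hT : ∀ j, T (lp.single 2 j 1) = f j)
    (hΘ : ∀ j, Θ (lp.single 2 j 1) = g j)
    (hParseval : T ∘L ContinuousLinearMap.adjoint T = K ∘L ContinuousLinearMap.adjoint K)
    (hdual : T ∘L ContinuousLinearMap.adjoint Θ = K)
    (hParseval' : Θ ∘L ContinuousLinearMap.adjoint Θ = ContinuousLinearMap.adjoint K ∘L K)
    (hclosed : IsClosed (Set.range K))
    (Sd : H →L[ℂ] H)
    (hSd_range : ∀ x : H, Sd x ∈ Set.range K)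
    (hSd_inv : ∀ x ∈ Set.range K, K (ContinuousLinearMap.adjoint K (Sd x)) = x)
    (hSd_inv' : ∀ x ∈ Set.range K, Sd (K (ContinuousLinearMap.adjoint K x)) = x)
    (hSd_ker : ∀ x ∈ (LinearMap.range (K : H →ₗ[ℂ] H) : Submodule ℂ H)ᗮ, Sd x = 0) :
    (‖Sd‖ ^ 2)⁻¹ * (1 - ‖K‖ ^ 2) ≤ ‖T - K ∘L Θ‖ ^ 2 ∧
      ‖T - K ∘L Θ‖ ^ 2 ≤ ‖K‖ ^ 4 :=
  stmt_9_general K T Θ hParseval hdual hParseval' Sd hSd_range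
end

section
/- Let K ∈ B(H) and let {f_j}_{j∈J} be a sequence in H. Then {f_j} is a K-frame for H if and only if there exists a bounded linear operator T: ℓ²(J) → H with f_j = Tδ_j for all j (where {δ_j} is the standard orthonormal basis of ℓ²(J)) and R(K) ⊆ R(T). -/
/-!
Write `T δ_j = f j` for the synthesis operator; its adjoint is the analysis operator
`x ↦ (⟪f j, x⟫)_j`, so `∑ |⟪f j, x⟫|² = ‖T* x‖²` and the frame bounds read
`A ‖K* x‖² ≤ ‖T* x‖² ≤ B ‖x‖²`. The upper bound is automatic for bounded `T`, and conversely
square-summability of the coefficients already makes the analysis operator bounded. The lower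
bound is Douglas' majorization condition, equivalent to `R(K) ⊆ R(T)`.
-/

open scoped ComplexInnerProductSpace
open ContinuousLinearMap
open scoped InnerProductSpace lp

section Douglas

variable {𝕜 E F G : Type*} [RCLike 𝕜]
  [NormedAddCommGroup E] [InnerProductSpace 𝕜 E] [CompleteSpace E]
  [NormedAddCommGroup F] [InnerProductSpace 𝕜 F] [CompleteSpace F]
  [NormedAddCommGroup G] [InnerProductSpace 𝕜 G] [CompleteSpace G]

-- `T* z ↦ ⟪y, z⟫` is a well defined functional on `R(T*)`, bounded by `c`; the Riesz
-- representative of its Hahn–Banach extension is a preimage of `y`.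
theorem mem_range_of_norm_inner_le (T : E →L[𝕜] F) {y : F} {c : ℝ}
    (h : ∀ z, ‖⟪y, z⟫_𝕜‖ ≤ c * ‖adjoint T z‖) : y ∈ Set.range T := by
  set S : F →ₗ[𝕜] E := (adjoint T).toLinearMap
  have inner_eq : ∀ z z', S z = S z' → ⟪y, z⟫_𝕜 = ⟪y, z'⟫_𝕜 := by
    intro z z' hzz'
    have h0 := h (z - z')
    rw [map_sub, show adjoint T z = adjoint T z' from hzz', sub_self, norm_zero, mul_zero,
      norm_le_zero_iff, inner_sub_right, sub_eq_zero] at h0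
    exact h0
  obtain ⟨σ, hσ⟩ := S.rangeRestrict.exists_rightInverse_of_surjective S.range_rangeRestrict
  have hSσ : ∀ w, S (σ w) = w := fun w => congrArg Subtype.val (LinearMap.congr_fun hσ w)
  set φ : LinearMap.range S →L[𝕜] 𝕜 :=
    ((innerₛₗ 𝕜 y).comp σ).mkContinuous c fun w => by
      have hw := h (σ w)
      rwa [show adjoint T (σ w) = w from hSσ w] at hw
  obtain ⟨g, hg, -⟩ := exists_extension_norm_eq _ φ
  refine ⟨(InnerProductSpace.toDual 𝕜 E).symm g, ext_inner_right 𝕜 fun z => ?_⟩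
  rw [← adjoint_inner_right, InnerProductSpace.toDual_symm_apply]
  have hz : S z ∈ LinearMap.range S := ⟨z, rfl⟩
  calc g (adjoint T z) = φ ⟨S z, hz⟩ := hg ⟨S z, hz⟩
    _ = ⟪y, z⟫_𝕜 := inner_eq _ _ (hSσ _)

-- For `K g = T u`, `|⟪K* x, g⟫| = |⟪T* x, u⟫| ≤ ‖u‖ ‖T* x‖`: the functionals `⟪K* x, ·⟫` with
-- `‖T* x‖ ≤ 1` are pointwise bounded, hence uniformly bounded by Banach–Steinhaus.
theorem exists_norm_adjoint_le_of_range_subset (T : E →L[𝕜] F) (K : G →L[𝕜] F)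
    (h : Set.range K ⊆ Set.range T) :
    ∃ c, ∀ x, ‖adjoint K x‖ ≤ c * ‖adjoint T x‖ := by
  choose u hu using fun g => h ⟨g, rfl⟩
  have inner_le : ∀ x g, ‖⟪adjoint K x, g⟫_𝕜‖ ≤ ‖u g‖ * ‖adjoint T x‖ := fun x g => by
    rw [adjoint_inner_left, ← hu, ← adjoint_inner_left, mul_comm]
    exact norm_inner_le_norm _ _
  obtain ⟨c, hc⟩ := banach_steinhaus
    (g := fun x : {x : F // ‖adjoint T x‖ ≤ 1} => innerSL 𝕜 (adjoint K x))
    fun g => ⟨‖u g‖, fun x => (inner_le x g).trans (mul_le_of_le_one_right (norm_nonneg _) x.2)⟩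
  refine ⟨c, fun x => ?_⟩
  by_cases hx : adjoint T x = 0
  · have hKx := inner_le x (adjoint K x)
    rw [hx, norm_zero, mul_zero, norm_le_zero_iff, inner_self_eq_zero] at hKx
    simp [hKx, hx]
  · have hpos : 0 < ‖adjoint T x‖ := norm_pos_iff.2 hx
    have ht : ‖((‖adjoint T x‖ : 𝕜))⁻¹‖ = ‖adjoint T x‖⁻¹ := by simp
    have hunit : ‖adjoint T (((‖adjoint T x‖ : 𝕜))⁻¹ • x)‖ ≤ 1 := by
      rw [map_smul, norm_smul, ht, inv_mul_cancel₀ hpos.ne']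
    have hbound := hc ⟨_, hunit⟩
    rw [innerSL_apply_norm, map_smul, norm_smul, ht, inv_mul_le_iff₀ hpos] at hbound
    linarith

theorem range_subset_range_iff_exists_sq_norm_adjoint_le (T : E →L[𝕜] F) (K : G →L[𝕜] F) :
    Set.range K ⊆ Set.range T ↔
      ∃ c > 0, ∀ x, ‖adjoint K x‖ ^ 2 ≤ c * ‖adjoint T x‖ ^ 2 := by
  constructor
  · intro h
    obtain ⟨c, hc⟩ := exists_norm_adjoint_le_of_range_subset T K h
    refine ⟨c ^ 2 + 1, by positivity, fun x => ?_⟩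
    calc ‖adjoint K x‖ ^ 2 ≤ (c * ‖adjoint T x‖) ^ 2 := by gcongr; exact hc x
      _ ≤ (c ^ 2 + 1) * ‖adjoint T x‖ ^ 2 := by rw [mul_pow]; gcongr; linarith
  · rintro ⟨c, hc, hKT⟩ - ⟨x, rfl⟩
    refine mem_range_of_norm_inner_le T (c := ‖x‖ * √c) fun z => ?_
    have hKz : ‖adjoint K z‖ ≤ √c * ‖adjoint T z‖ := by
      rw [← pow_le_pow_iff_left₀ (norm_nonneg _) (by positivity) two_ne_zero, mul_pow,
        Real.sq_sqrt hc.le]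
      exact hKT z
    calc ‖⟪K x, z⟫_𝕜‖ = ‖⟪x, adjoint K z⟫_𝕜‖ := by rw [adjoint_inner_right]
      _ ≤ ‖x‖ * (√c * ‖adjoint T z‖) := by
        grw [norm_inner_le_norm, hKz]
      _ = ‖x‖ * √c * ‖adjoint T z‖ := by ring

end Douglas

theorem lp.hasSum_norm_sq {J : Type*} {G : J → Type*} [∀ j, NormedAddCommGroup (G j)]
    (v : lp G 2) : HasSum (fun j => ‖v j‖ ^ 2) (‖v‖ ^ 2) := by
  simpa [Real.rpow_two] using lp.hasSum_norm (p := 2) (by norm_num) v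

section Synthesis

variable {𝕜 E J : Type*} [RCLike 𝕜] [NormedAddCommGroup E] [InnerProductSpace 𝕜 E]
  [CompleteSpace E] [DecidableEq J]

theorem adjoint_apply_eq_inner_apply_single (T : ℓ²(J, 𝕜) →L[𝕜] E) (x : E) (j : J) :
    adjoint T x j = ⟪T (lp.single 2 j 1), x⟫_𝕜 := by
  rw [← adjoint_inner_right, lp.inner_single_left]
  simp

theorem hasSum_norm_inner_apply_single_sq (T : ℓ²(J, 𝕜) →L[𝕜] E) (x : E) :
    HasSum (fun j => ‖⟪T (lp.single 2 j 1), x⟫_𝕜‖ ^ 2) (‖adjoint T x‖ ^ 2) := by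
  simpa only [adjoint_apply_eq_inner_apply_single] using lp.hasSum_norm_sq (adjoint T x)

-- The analysis operator `x ↦ (⟪f j, x⟫)_j` is bounded by the closed graph theorem.
theorem exists_synthesis_of_summable {f : J → E}
    (hf : ∀ x, Summable fun j => ‖⟪f j, x⟫_𝕜‖ ^ 2) :
    ∃ T : ℓ²(J, 𝕜) →L[𝕜] E, ∀ j, f j = T (lp.single 2 j 1) := by
  let θ : E →ₗ[𝕜] ℓ²(J, 𝕜) :=
    { toFun := fun x => ⟨fun j => ⟪f j, x⟫_𝕜, memℓp_gen (by simpa [Real.rpow_two] using hf x)⟩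
      map_add' := fun x y => lp.ext <| funext fun j => inner_add_right _ _ _
      map_smul' := fun a x => lp.ext <| funext fun j => inner_smul_right _ _ _ }
  have hθ : Continuous θ := θ.continuous_of_seq_closed_graph fun u x y hu hθu => by
    refine lp.ext <| funext fun j => tendsto_nhds_unique
      (((lp.evalCLM 𝕜 (fun _ : J => 𝕜) 2 j).continuous.tendsto y).comp hθu) ?_
    exact ((innerSL 𝕜 (f j)).continuous.tendsto x).comp hu
  refine ⟨adjoint ⟨θ, hθ⟩, fun j => ext_inner_right 𝕜 fun x => ?_⟩
  rw [← adjoint_apply_eq_inner_apply_single, adjoint_adjoint]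
  rfl

end Synthesis

/-- `{f_j}` is a `K`-frame for `H` if and only if there is a bounded operator
`T : ℓ²(J) → H` with `f_j = T δ_j` for all `j` and `R(K) ⊆ R(T)`. -/
theorem stmt_11 {H : Type*} [NormedAddCommGroup H] [InnerProductSpace ℂ H] [CompleteSpace H]
    {J : Type} [DecidableEq J] (K : H →L[ℂ] H) (f : J → H) :
    (∃ A B : ℝ, 0 < A ∧ A ≤ B ∧ ∀ x : H,
        Summable (fun j => ‖⟪f j, x⟫‖ ^ 2) ∧
        A * ‖ContinuousLinearMap.adjoint K x‖ ^ 2 ≤ ∑' j, ‖⟪f j, x⟫‖ ^ 2 ∧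
        ∑' j, ‖⟪f j, x⟫‖ ^ 2 ≤ B * ‖x‖ ^ 2)
      ↔ ∃ T : lp (fun _ : J => ℂ) 2 →L[ℂ] H,
          (∀ j, f j = T (lp.single 2 j 1)) ∧ Set.range K ⊆ Set.range T := by
  constructor
  · rintro ⟨A, B, hA, -, hf⟩
    obtain ⟨T, hT⟩ := exists_synthesis_of_summable fun x => (hf x).1
    obtain rfl : f = _ := funext hT
    refine ⟨T, fun j => rfl,
      (range_subset_range_iff_exists_sq_norm_adjoint_le T K).2 ⟨A⁻¹, inv_pos.2 hA, fun x => ?_⟩⟩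
    rw [le_inv_mul_iff₀ hA, ← (hasSum_norm_inner_apply_single_sq T x).tsum_eq]
    exact (hf x).2.1
  · rintro ⟨T, hT, hKT⟩
    obtain rfl : f = _ := funext hT
    obtain ⟨c, hc, hKc⟩ := (range_subset_range_iff_exists_sq_norm_adjoint_le T K).1 hKT
    refine ⟨c⁻¹, max c⁻¹ (‖T‖ ^ 2), inv_pos.2 hc, le_max_left _ _, fun x => ?_⟩
    have hx := hasSum_norm_inner_apply_single_sq T x
    rw [hx.tsum_eq]
    refine ⟨hx.summable, (inv_mul_le_iff₀ hc).2 (hKc x), ?_⟩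
    calc ‖adjoint T x‖ ^ 2 ≤ (‖T‖ * ‖x‖) ^ 2 := by
          gcongr
          simpa only [adjoint.norm_map] using (adjoint T).le_opNorm x
      _ ≤ max c⁻¹ (‖T‖ ^ 2) * ‖x‖ ^ 2 := by rw [mul_pow]; gcongr; exact le_max_right _ _
end

section
/- Let {f_j}_{j∈J} be a Parseval K-frame for H where K has closed range, and let T be its synthesis operator. Then R(T) = R(K); in particular every frame vector f_j lies in the range of K. -/
/-!
Parseval says `‖T† x‖ = ‖K† x‖` for every `x`. Hence `T†` and `K†` have the same kernel, so `T` and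
`K` have ranges with the same closure, and `R(T) ⊆ R(K)` because `R(K)` is closed. Conversely, the
open mapping theorem for `K` onto its closed range gives `‖y‖ ≤ C ‖K† y‖ = C ‖T† y‖` on `R(K)`; so
`T T†`, as an operator on `R(K)`, is bounded below and self-adjoint, hence onto, and `R(K) ⊆ R(T)`.
-/

open scoped ComplexInnerProductSpace
open ContinuousLinearMap

theorem le_of_sq_le_mul {a b : ℝ} (hb : 0 ≤ b) (h : a ^ 2 ≤ b * a) : a ≤ b := by
  nlinarith

namespace ContinuousLinearMap

section Range

variable {𝕜 E F G : Type*} [RCLike 𝕜]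
  [NormedAddCommGroup E] [InnerProductSpace 𝕜 E] [CompleteSpace E]
  [NormedAddCommGroup F] [InnerProductSpace 𝕜 F] [CompleteSpace F]
  [NormedAddCommGroup G] [InnerProductSpace 𝕜 G] [CompleteSpace G]

theorem exists_norm_le_mul_norm_adjoint_of_surjective {A : E →L[𝕜] F}
    (hA : Function.Surjective A) : ∃ C, ∀ y, ‖y‖ ≤ C * ‖adjoint A y‖ := by
  obtain ⟨C, hC, hpre⟩ := A.exists_preimage_norm_le hA
  refine ⟨C, fun y => ?_⟩
  obtain ⟨x, rfl, hx⟩ := hpre y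
  refine le_of_sq_le_mul (by positivity) ?_
  calc
    ‖A x‖ ^ 2 = RCLike.re (inner 𝕜 x (adjoint A (A x))) := by
      rw [adjoint_inner_right, inner_self_eq_norm_sq]
    _ ≤ ‖x‖ * ‖adjoint A (A x)‖ := re_inner_le_norm _ _
    _ ≤ C * ‖A x‖ * ‖adjoint A (A x)‖ := by gcongr
    _ = C * ‖adjoint A (A x)‖ * ‖A x‖ := by ring

theorem surjective_of_norm_le_mul_norm_adjoint (A : E →L[𝕜] F) (C : ℝ)
    (h : ∀ y, ‖y‖ ≤ C * ‖adjoint A y‖) : Function.Surjective A := by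
  set B := A ∘L adjoint A
  have hB : ∀ y, ‖y‖ ≤ C ^ 2 * ‖B y‖ := by
    intro y
    refine le_of_sq_le_mul (by positivity) ?_
    calc
      ‖y‖ ^ 2 ≤ C ^ 2 * ‖adjoint A y‖ ^ 2 := by
        rw [← mul_pow]; exact pow_le_pow_left₀ (norm_nonneg y) (h y) 2
      _ = C ^ 2 * RCLike.re (inner 𝕜 (B y) y) := by
        rw [comp_apply, ← adjoint_inner_right, inner_self_eq_norm_sq]
      _ ≤ C ^ 2 * (‖B y‖ * ‖y‖) := by gcongr; exact re_inner_le_norm _ _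
      _ = C ^ 2 * ‖B y‖ * ‖y‖ := by ring
  have hclosed : IsClosed (B.range : Set F) :=
    (B.antilipschitz_of_bound (K := ⟨C ^ 2, sq_nonneg C⟩) hB).isClosed_range B.uniformContinuous
  have hker : B.ker = ⊥ := by
    rw [Submodule.eq_bot_iff]
    intro y hy
    have hBy : B y = 0 := hy
    simpa [hBy] using hB y
  have hdense : B.rangeᗮ = ⊥ := by
    rw [orthogonal_range, adjoint_comp, adjoint_adjoint, hker]
  have htop : B.range = ⊤ := by
    rw [← hclosed.submodule_topologicalClosure_eq, ← Submodule.orthogonal_orthogonal_eq_closure,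
      hdense, Submodule.bot_orthogonal_eq_top]
  intro y
  obtain ⟨x, hx⟩ := LinearMap.range_eq_top.mp htop y
  exact ⟨adjoint A x, hx⟩

theorem range_le_range_of_ker_adjoint_le (A : E →L[𝕜] F) (B : G →L[𝕜] F)
    (hB : IsClosed (B.range : Set F)) (h : (adjoint B).ker ≤ (adjoint A).ker) :
    A.range ≤ B.range :=
  calc
    A.range ≤ A.range.topologicalClosure := A.range.le_topologicalClosure
    _ = (adjoint A).kerᗮ := by rw [← orthogonal_range, Submodule.orthogonal_orthogonal_eq_closure]
    _ ≤ (adjoint B).kerᗮ := Submodule.orthogonal_le h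
    _ = B.range := by
      rw [← orthogonal_range, Submodule.orthogonal_orthogonal_eq_closure,
        hB.submodule_topologicalClosure_eq]

theorem adjoint_codRestrict_apply (A : E →L[𝕜] F) (V : Submodule 𝕜 F) [CompleteSpace V]
    (h : ∀ x, A x ∈ V) (y : V) : adjoint (A.codRestrict V h) y = adjoint A y :=
  ext_inner_left 𝕜 fun x => by rw [adjoint_inner_right, adjoint_inner_right]; rfl

theorem exists_norm_le_mul_norm_adjoint_of_isClosed_range (B : G →L[𝕜] F)
    (hB : IsClosed (B.range : Set F)) : ∃ C, ∀ y ∈ B.range, ‖y‖ ≤ C * ‖adjoint B y‖ := by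
  have : CompleteSpace B.range := hB.completeSpace_coe
  obtain ⟨C, hC⟩ := exists_norm_le_mul_norm_adjoint_of_surjective
    (A := B.codRestrict B.range fun x => ⟨x, rfl⟩) fun ⟨_, x, rfl⟩ => ⟨x, rfl⟩
  refine ⟨C, fun y hy => ?_⟩
  simpa only [adjoint_codRestrict_apply B B.range (fun x => ⟨x, rfl⟩), Submodule.coe_norm]
    using hC ⟨y, hy⟩

theorem le_range_of_norm_le_mul_norm_adjoint (A : E →L[𝕜] F) (V : Submodule 𝕜 F)
    [CompleteSpace V] (hAV : A.range ≤ V) (C : ℝ) (h : ∀ y ∈ V, ‖y‖ ≤ C * ‖adjoint A y‖) :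
    V ≤ A.range := by
  have hAV' : ∀ x, A x ∈ V := fun x => hAV ⟨x, rfl⟩
  have hsurj := surjective_of_norm_le_mul_norm_adjoint (A.codRestrict V hAV') C fun y => by
    simpa only [adjoint_codRestrict_apply A V hAV', Submodule.coe_norm] using h y y.2
  intro y hy
  obtain ⟨x, hx⟩ := hsurj ⟨y, hy⟩
  exact ⟨x, congrArg Subtype.val hx⟩

theorem range_eq_range_of_norm_adjoint_eq (A : E →L[𝕜] F) (B : G →L[𝕜] F)
    (hB : IsClosed (B.range : Set F)) (h : ∀ y, ‖adjoint A y‖ = ‖adjoint B y‖) :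
    A.range = B.range := by
  have hAB : A.range ≤ B.range :=
    range_le_range_of_ker_adjoint_le A B hB fun y hy => by
      rw [LinearMap.mem_ker, coe_coe] at hy ⊢
      rw [← norm_eq_zero, h, hy, norm_zero]
  have : CompleteSpace B.range := hB.completeSpace_coe
  obtain ⟨C, hC⟩ := exists_norm_le_mul_norm_adjoint_of_isClosed_range B hB
  exact hAB.antisymm <| le_range_of_norm_le_mul_norm_adjoint A _ hAB C fun y hy => h y ▸ hC y hy

end Range

section Synthesis

variable {𝕜 E J : Type*} [RCLike 𝕜] [NormedAddCommGroup E] [InnerProductSpace 𝕜 E]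
  [CompleteSpace E] [DecidableEq J]

theorem adjoint_apply_eq_inner_single (T : lp (fun _ : J => 𝕜) 2 →L[𝕜] E) (x : E) (j : J) :
    adjoint T x j = inner 𝕜 (T (lp.single 2 j 1)) x := by
  rw [← adjoint_inner_right, lp.inner_single_left]
  simp

theorem hasSum_norm_inner_single_sq (T : lp (fun _ : J => 𝕜) 2 →L[𝕜] E) (x : E) :
    HasSum (fun j => ‖inner 𝕜 (T (lp.single 2 j 1)) x‖ ^ 2) (‖adjoint T x‖ ^ 2) := by
  simpa [adjoint_apply_eq_inner_single] using lp.hasSum_norm (p := 2) (by simp) (adjoint T x)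

end Synthesis

end ContinuousLinearMap

/-- If `{f_j}` is a Parseval `K`-frame for `H`, `K` has closed range, and `T` is the
synthesis operator, then `R(T) = R(K)`; in particular every `f_j` lies in `R(K)`. -/
theorem stmt_19 {H : Type*} [NormedAddCommGroup H] [InnerProductSpace ℂ H] [CompleteSpace H]
    {J : Type} [DecidableEq J] (K : H →L[ℂ] H) (f : J → H)
    (hclosed : IsClosed (Set.range K))
    (T : lp (fun _ : J => ℂ) 2 →L[ℂ] H)
    (hT : ∀ j, T (lp.single 2 j 1) = f j)
    (hParseval : ∀ x : H,
      HasSum (fun j => ‖⟪f j, x⟫‖ ^ 2) (‖ContinuousLinearMap.adjoint K x‖ ^ 2)) :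
    Set.range T = Set.range K ∧ ∀ j, f j ∈ Set.range K := by
  have hnorm : ∀ x, ‖adjoint T x‖ = ‖adjoint K x‖ := fun x => by
    have h := T.hasSum_norm_inner_single_sq x
    simp only [hT] at h
    exact (sq_eq_sq₀ (norm_nonneg _) (norm_nonneg _)).mp (h.unique (hParseval x))
  have hrange : Set.range T = Set.range K := by
    have h := T.range_eq_range_of_norm_adjoint_eq K (by rwa [LinearMap.coe_range, coe_coe]) hnorm
    simpa only [LinearMap.coe_range, coe_coe] using congrArg SetLike.coe h
  exact ⟨hrange, fun j => hrange ▸ ⟨_, hT j⟩⟩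
end
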